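/- Let W be the lazy random walk on a finite simple connected regular graph G = (V,E), started from the uniform stationary distribution π. Fix s ≥ t_mix + 1 and a finite interval A ⊂ ℕ_0 with #A ≥ 2s+1. Then E_π[# R^W(NE^{W,s}(A))] ≥ E_π[# NE^{W,s}(A)] − 2(#A − 2s)²/#V; i.e., the number of distinct vertices in the locally non-erased path differs from the number of locally non-erased indices by at most 2(#A−2s)²/#V in expectation. -/

import Mathlib

open Finset

variable {V : Type*} [Fintype V] [DecidableEq V] [Nonempty V]

/-- One-step transition kernel of the lazy random walk on `G`:
stay put with probability `1/2`, otherwise move to a uniformly chosen neighbour. -/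
noncomputable def lazyStep (G : SimpleGraph V) [DecidableRel G.Adj] (x y : V) : ℝ :=
  if x = y then 1 / 2 else if G.Adj x y then 1 / (2 * (G.degree x : ℝ)) else 0

/-- `n`-step transition probabilities of the lazy random walk. -/
noncomputable def lazyProb (G : SimpleGraph V) [DecidableRel G.Adj] : ℕ → V → V → ℝ
  | 0, x, y => if x = y then 1 else 0
  | n + 1, x, y => ∑ z : V, lazyStep G x z * lazyProb G n z y

/-- The stationary (degree-biased) distribution `π(x) = deg(x)/(2#E)`. -/
noncomputable def statDist (G : SimpleGraph V) [DecidableRel G.Adj] (x : V) : ℝ :=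
  (G.degree x : ℝ) / (2 * (G.edgeFinset.card : ℝ))

/-- The uniform `(ℓ∞, 1/4)` mixing time. -/
noncomputable def tmix (G : SimpleGraph V) [DecidableRel G.Adj] : ℕ :=
  sInf {n : ℕ | ∀ x y : V, |lazyProb G n x y / statDist G y - 1| ≤ 1 / 4}

/-- Extension of a finite path to all of `ℕ` (constant after time `N`). -/
def extPath (N : ℕ) (γ : Fin (N + 1) → V) : ℕ → V :=
  fun n => γ ⟨min n N, Nat.lt_succ_of_le (min_le_right n N)⟩

/-- Weight of a finite path under the lazy random walk kernel. -/
noncomputable def pathWeight (G : SimpleGraph V) [DecidableRel G.Adj]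
    (N : ℕ) (γ : Fin (N + 1) → V) : ℝ :=
  ∏ i ∈ Finset.range N, lazyStep G (extPath N γ i) (extPath N γ (i + 1))

open Classical in
/-- Probability, for the lazy random walk started at `ρ`, of a path event
depending only on the first `N+1` coordinates. -/
noncomputable def walkProb (G : SimpleGraph V) [DecidableRel G.Adj]
    (ρ : V) (N : ℕ) (E : (ℕ → V) → Prop) : ℝ :=
  ∑ γ : Fin (N + 1) → V,
    if extPath N γ 0 = ρ ∧ E (extPath N γ) then pathWeight G N γ else 0

open Classical in
/-- Expectation, for the lazy random walk started at `ρ`, of a path functional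
depending only on the first `N+1` coordinates. -/
noncomputable def walkExp (G : SimpleGraph V) [DecidableRel G.Adj]
    (ρ : V) (N : ℕ) (f : (ℕ → V) → ℝ) : ℝ :=
  ∑ γ : Fin (N + 1) → V,
    if extPath N γ 0 = ρ then pathWeight G N γ * f (extPath N γ) else 0

open Classical in
/-- Probability of a path event for the lazy random walk started from `π`. -/
noncomputable def walkProbStat (G : SimpleGraph V) [DecidableRel G.Adj]
    (N : ℕ) (E : (ℕ → V) → Prop) : ℝ :=
  ∑ γ : Fin (N + 1) → V,
    if E (extPath N γ) then statDist G (extPath N γ 0) * pathWeight G N γ else 0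

/-- Expectation of a path functional for the lazy random walk started from `π`. -/
noncomputable def walkExpStat (G : SimpleGraph V) [DecidableRel G.Adj]
    (N : ℕ) (f : (ℕ → V) → ℝ) : ℝ :=
  ∑ γ : Fin (N + 1) → V,
    statDist G (extPath N γ 0) * pathWeight G N γ * f (extPath N γ)

open Classical in
/-- Probability of a joint event for two independent lazy random walks,
each started from the stationary distribution. -/
noncomputable def twoWalkProbStat (G : SimpleGraph V) [DecidableRel G.Adj]
    (N : ℕ) (E : (ℕ → V) → (ℕ → V) → Prop) : ℝ :=
  ∑ γ₁ : Fin (N + 1) → V, ∑ γ₂ : Fin (N + 1) → V,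
    if E (extPath N γ₁) (extPath N γ₂) then
      (statDist G (extPath N γ₁ 0) * pathWeight G N γ₁) *
      (statDist G (extPath N γ₂ 0) * pathWeight G N γ₂) else 0

open Classical in
/-- Probability of a joint event for two independent lazy random walks,
both started at the vertex `ρ`. -/
noncomputable def twoWalkProbFrom (G : SimpleGraph V) [DecidableRel G.Adj]
    (ρ : V) (N : ℕ) (E : (ℕ → V) → (ℕ → V) → Prop) : ℝ :=
  ∑ γ₁ : Fin (N + 1) → V, ∑ γ₂ : Fin (N + 1) → V,
    if extPath N γ₁ 0 = ρ ∧ extPath N γ₂ 0 = ρ ∧ E (extPath N γ₁) (extPath N γ₂) then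
      pathWeight G N γ₁ * pathWeight G N γ₂ else 0

/-- Range of a path over a finite set of times. -/
def walkRange (w : ℕ → V) (A : Finset ℕ) : Finset V := A.image w

/-- `q̄^G(s)`: averaged intersection probability of two independent lazy walks
started at the same (uniform) vertex. -/
noncomputable def qbar (G : SimpleGraph V) [DecidableRel G.Adj] (s : ℕ) : ℝ :=
  (1 / (Fintype.card V : ℝ)) * ∑ ρ : V,
    twoWalkProbFrom G ρ s (fun w₁ w₂ =>
      (walkRange w₁ (Finset.Icc 0 s) ∩ walkRange w₂ (Finset.Icc 1 s)).Nonempty)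

/-- `H^W_ρ(m) = Σ_{i=0}^m Σ_{j=0}^m P_ρ(W(i+j)=ρ)`. -/
noncomputable def HW (G : SimpleGraph V) [DecidableRel G.Adj] (ρ : V) (m : ℕ) : ℝ :=
  ∑ i ∈ Finset.range (m + 1), ∑ j ∈ Finset.range (m + 1), lazyProb G (i + j) ρ ρ

open Classical in
/-- Non-erased time indices of the chronological loop erasure of a path on the
interval starting at `a`: `NEseg w a k` is `NE^{w,[a,·]}(a+k)`. -/
noncomputable def NEseg (w : ℕ → V) (a : ℕ) : ℕ → Finset ℕ
  | 0 => {a}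
  | k + 1 =>
      (NEseg w a k).filter (fun m =>
        w (a + k + 1) ∉ ((NEseg w a k).filter (fun h => h ≤ m)).image w) ∪ {a + k + 1}

open Classical in
/-- `(A,s)`-locally non-erased time indices for `A = [a,b]`:
indices `m ∈ [a+s, b-s]` such that the range of the locally loop-erased segment
`NE^{w,[m-s,m]}(m)` does not meet the range of `w` on `[m+1,m+s]`. -/
noncomputable def NEloc (w : ℕ → V) (s a b : ℕ) : Finset ℕ :=
  (Finset.Icc (a + s) (b - s)).filter (fun m =>
    walkRange w (NEseg w (m - s) s) ∩ walkRange w (Finset.Icc (m + 1) (m + s)) = ∅)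


/-!
If `j < k` are locally non-erased indices with `W j = W k`, then `k > j + s`: the index `j` itself
survives the loop erasure on `[j - s, j]`, and the range of that erasure avoids `W[j + 1, j + s]`.
Hence `#NE ≤ #R(NE) + #{(j, k) : j + s < k, W j = W k}`, the pairs being taken in
`[min A + s, max A - s]`, so that there are at most `(#A - 2s)²` of them. From the uniform
stationary start, `P(W j = W k) = #V⁻¹ ∑_y P^{k-j}(y, y)`, and `k - j ≥ t_mix` gives
`P^{k-j}(y, y) ≤ (5/4)/#V`. The set defining `t_mix` is nonempty by a Doeblin argument: on a
connected graph the lazy kernel is entrywise positive after `#V` steps, and such a kernel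
contracts the oscillation of every function.
-/

lemma sum_mul_sub_sum_mul_le_of_le {ι : Type*} [Fintype ι] [Nonempty ι] {p q f : ι → ℝ}
    {δ D : ℝ} (hp : ∀ i, δ ≤ p i) (hq : ∀ i, δ ≤ q i) (hp1 : ∑ i, p i = 1) (hq1 : ∑ i, q i = 1)
    (hf : ∀ i j, f i - f j ≤ D) :
    ∑ i, p i * f i - ∑ i, q i * f i ≤ (1 - Fintype.card ι * δ) * D := by
  obtain ⟨i₀, hi₀⟩ := Finite.exists_min f
  have hmass : ∑ i, (p i - δ) = 1 - Fintype.card ι * δ := by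
    simp [Finset.sum_sub_distrib, hp1]
  -- Doeblin: both rows put mass `δ` on every point, and only the remaining mass can separate them.
  have hsplit : ∑ i, p i * f i - ∑ i, q i * f i
      = ∑ i, (p i - δ) * (f i - f i₀) - ∑ i, (q i - δ) * (f i - f i₀) := by
    simp only [sub_mul, mul_sub, Finset.sum_sub_distrib, ← Finset.sum_mul, hp1, hq1]
    ring
  have hp_part : ∑ i, (p i - δ) * (f i - f i₀) ≤ (1 - Fintype.card ι * δ) * D := by
    rw [← hmass, Finset.sum_mul]
    exact Finset.sum_le_sum fun i _ =>
      mul_le_mul_of_nonneg_left (hf i i₀) (sub_nonneg.2 (hp i))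
  have hq_part : 0 ≤ ∑ i, (q i - δ) * (f i - f i₀) :=
    Finset.sum_nonneg fun i _ => mul_nonneg (sub_nonneg.2 (hq i)) (sub_nonneg.2 (hi₀ i))
  linarith

section Kernel

omit [Nonempty V]

variable (G : SimpleGraph V) [DecidableRel G.Adj]

lemma lazyStep_nonneg (x y : V) : 0 ≤ lazyStep G x y := by
  unfold lazyStep
  split_ifs <;> positivity

lemma lazyStep_pos_of_adj {x y : V} (h : G.Adj x y) : 0 < lazyStep G x y := by
  have := h.degree_pos_left
  rw [lazyStep, if_neg h.ne, if_pos h]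
  positivity

lemma lazyStep_comm {d : ℕ} (hreg : G.IsRegularOfDegree d) (x y : V) :
    lazyStep G x y = lazyStep G y x := by
  simp only [lazyStep, hreg x, hreg y, eq_comm (a := x), G.adj_comm x y]

lemma sum_lazyStep {d : ℕ} (hreg : G.IsRegularOfDegree d) (hd : 0 < d) (x : V) :
    ∑ y, lazyStep G x y = 1 := by
  have hsplit (y : V) : lazyStep G x y =
      (if x = y then 1 / 2 else 0) + (if G.Adj x y then 1 / (2 * (d : ℝ)) else 0) := by
    by_cases h : x = y <;> simp [lazyStep, h, hreg x]
  simp_rw [hsplit, sum_add_distrib, sum_ite_eq, ← sum_filter, sum_const,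
    ← SimpleGraph.neighborFinset_eq_filter, SimpleGraph.card_neighborFinset_eq_degree, hreg x]
  simp only [mem_univ, if_true, nsmul_eq_mul]
  field_simp
  norm_num

lemma lazyProb_eq_pow (n : ℕ) (x y : V) :
    lazyProb G n x y = (Matrix.of (lazyStep G) ^ n) x y := by
  induction n generalizing x with
  | zero => simp [lazyProb, Matrix.one_apply]
  | succ n ih => simp [lazyProb, pow_succ', Matrix.mul_apply, ih]

lemma lazyProb_add (m n : ℕ) (x y : V) :
    lazyProb G (m + n) x y = ∑ z, lazyProb G m x z * lazyProb G n z y := by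
  simp only [lazyProb_eq_pow, pow_add, Matrix.mul_apply]

lemma lazyProb_succ_right (n : ℕ) (x y : V) :
    lazyProb G (n + 1) x y = ∑ z, lazyProb G n x z * lazyStep G z y := by
  simp [lazyProb_eq_pow, pow_succ, Matrix.mul_apply]

lemma lazyProb_comm {d : ℕ} (hreg : G.IsRegularOfDegree d) (n : ℕ) (x y : V) :
    lazyProb G n x y = lazyProb G n y x := by
  have hsymm : (Matrix.of (lazyStep G)).IsSymm :=
    Matrix.IsSymm.ext fun x y => lazyStep_comm G hreg y x
  rw [lazyProb_eq_pow, lazyProb_eq_pow, (hsymm.pow n).apply]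

lemma lazyProb_nonneg (n : ℕ) (x y : V) : 0 ≤ lazyProb G n x y := by
  induction n generalizing x with
  | zero => unfold lazyProb; split_ifs <;> norm_num
  | succ n ih => exact Finset.sum_nonneg fun z _ => mul_nonneg (lazyStep_nonneg G x z) (ih z)

lemma sum_lazyProb {d : ℕ} (hreg : G.IsRegularOfDegree d) (hd : 0 < d) (n : ℕ) (x : V) :
    ∑ y, lazyProb G n x y = 1 := by
  induction n generalizing x with
  | zero => simp [lazyProb]
  | succ n ih =>
    simp only [lazyProb]
    rw [Finset.sum_comm]
    simp [← Finset.mul_sum, ih, sum_lazyStep G hreg hd]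

lemma sum_lazyProb_left {d : ℕ} (hreg : G.IsRegularOfDegree d) (hd : 0 < d) (n : ℕ) (y : V) :
    ∑ x, lazyProb G n x y = 1 := by
  simp_rw [lazyProb_comm G hreg n _ y, sum_lazyProb G hreg hd]

lemma lazyProb_pos_of_walk {x y : V} (p : G.Walk x y) : 0 < lazyProb G p.length x y := by
  induction p with
  | nil => simp [lazyProb]
  | @cons u v w h p ih =>
    calc 0 < lazyStep G u v * lazyProb G p.length v w := mul_pos (lazyStep_pos_of_adj G h) ih
      _ ≤ lazyProb G (p.length + 1) u w :=
        Finset.single_le_sum (f := fun z => lazyStep G u z * lazyProb G p.length z w)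
          (fun z _ => mul_nonneg (lazyStep_nonneg G u z) (lazyProb_nonneg G _ z w)) (mem_univ v)

lemma lazyProb_pos_of_le {m n : ℕ} (hmn : m ≤ n) {x y : V} (hpos : 0 < lazyProb G m x y) :
    0 < lazyProb G n x y := by
  induction n, hmn using Nat.le_induction with
  | base => exact hpos
  | succ n _ ih =>
    calc 0 < lazyStep G x x * lazyProb G n x y := by simpa [lazyStep] using ih
      _ ≤ lazyProb G (n + 1) x y :=
        Finset.single_le_sum (f := fun z => lazyStep G x z * lazyProb G n z y)
          (fun z _ => mul_nonneg (lazyStep_nonneg G x z) (lazyProb_nonneg G _ z y)) (mem_univ x)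

lemma lazyProb_card_pos (hconn : G.Connected) (x y : V) :
    0 < lazyProb G (Fintype.card V) x y := by
  obtain ⟨p⟩ := hconn.preconnected x y
  exact lazyProb_pos_of_le G p.bypass_isPath.length_lt.le (lazyProb_pos_of_walk G _)

lemma lazyProb_sub_lazyProb_le_pow {d : ℕ} (hreg : G.IsRegularOfDegree d) (hd : 0 < d) {n₀ : ℕ} {δ : ℝ} (hδ : ∀ x y, δ ≤ lazyProb G n₀ x y)
    (r : ℕ) (x x' y : V) :
    lazyProb G (r * n₀) x y - lazyProb G (r * n₀) x' y ≤ (1 - Fintype.card V * δ) ^ r := by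
  induction r generalizing x x' with
  | zero => simp only [zero_mul, lazyProb]; split_ifs <;> norm_num
  | succ r ih =>
    rw [add_one_mul, add_comm, lazyProb_add, lazyProb_add, pow_succ']
    have : Nonempty V := ⟨x⟩
    exact sum_mul_sub_sum_mul_le_of_le (hδ x) (hδ x') (sum_lazyProb G hreg hd _ x)
      (sum_lazyProb G hreg hd _ x') fun z z' => ih z z'

end Kernel

section Mixing

variable (G : SimpleGraph V) [DecidableRel G.Adj] {d : ℕ} (hreg : G.IsRegularOfDegree d)
  (hd : 0 < d)
include hreg hd

lemma exists_abs_card_mul_lazyProb_sub_one_le (hconn : G.Connected) :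
    ∃ n, ∀ x y : V, |Fintype.card V * lazyProb G n x y - 1| ≤ 1 / 4 := by
  set K := Fintype.card V with hK_def
  obtain ⟨⟨x₀, y₀⟩, hmin⟩ := Finite.exists_min fun xy : V × V => lazyProb G K xy.1 xy.2
  have hK : (0 : ℝ) < K := by simp [K, Fintype.card_pos]
  have hKδ : 0 < K * lazyProb G K x₀ y₀ := mul_pos hK (lazyProb_card_pos G hconn x₀ y₀)
  obtain ⟨r, hr⟩ := exists_pow_lt_of_lt_one (by positivity : (0 : ℝ) < 1 / (4 * K))
    (by linarith : 1 - K * lazyProb G K x₀ y₀ < 1)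
  have hclose (x x' y : V) : |lazyProb G (r * K) x y - lazyProb G (r * K) x' y| ≤ 1 / (4 * K) :=
    have hcontr := lazyProb_sub_lazyProb_le_pow G hreg hd (fun x y => hmin (x, y)) r
    abs_sub_le_iff.2 ⟨(hcontr x x' y).trans hr.le, (hcontr x' x y).trans hr.le⟩
  refine ⟨r * K, fun x y => ?_⟩
  calc |K * lazyProb G (r * K) x y - 1|
      = |∑ x', (lazyProb G (r * K) x y - lazyProb G (r * K) x' y)| := by
        rw [Finset.sum_sub_distrib, sum_lazyProb_left G hreg hd, sum_const, card_univ,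
          ← hK_def, nsmul_eq_mul]
    _ ≤ ∑ x', |lazyProb G (r * K) x y - lazyProb G (r * K) x' y| := abs_sum_le_sum_abs _ _
    _ ≤ ∑ _x' : V, 1 / (4 * (K : ℝ)) := Finset.sum_le_sum fun x' _ => hclose x x' y
    _ = 1 / 4 := by
      rw [sum_const, card_univ, ← hK_def, nsmul_eq_mul]
      field_simp

omit [DecidableEq V] in
lemma statDist_eq_inv_card (x : V) : statDist G x = (Fintype.card V : ℝ)⁻¹ := by
  have hedges : Fintype.card V * d = 2 * #G.edgeFinset := by
    rw [← G.sum_degrees_eq_twice_card_edges]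
    simp [hreg _, mul_comm]
  have hd' : (d : ℝ) ≠ 0 := by positivity
  rw [statDist, hreg x, ← Nat.cast_ofNat, ← Nat.cast_mul, ← hedges]
  push_cast
  field_simp

lemma abs_card_mul_lazyProb_tmix_sub_one_le (hconn : G.Connected) (x y : V) :
    |Fintype.card V * lazyProb G (tmix G) x y - 1| ≤ 1 / 4 := by
  have hset : {n : ℕ | ∀ x y : V, |lazyProb G n x y / statDist G y - 1| ≤ 1 / 4}
      = {n : ℕ | ∀ x y : V, |Fintype.card V * lazyProb G n x y - 1| ≤ 1 / 4} := by
    simp [statDist_eq_inv_card G hreg hd, mul_comm]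
  have hmem : tmix G ∈ {n : ℕ | ∀ x y : V, |Fintype.card V * lazyProb G n x y - 1| ≤ 1 / 4} := by
    rw [tmix, hset]
    exact Nat.sInf_mem (exists_abs_card_mul_lazyProb_sub_one_le G hreg hd hconn)
  exact hmem x y

lemma lazyProb_le_of_tmix_le (hconn : G.Connected) {n : ℕ} (hn : tmix G ≤ n) (x y : V) :
    lazyProb G n x y ≤ 5 / 4 / Fintype.card V := by
  have htmix (z : V) : lazyProb G (tmix G) z y ≤ 5 / 4 / Fintype.card V := by
    have := abs_card_mul_lazyProb_tmix_sub_one_le G hreg hd hconn z y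
    rw [le_div_iff₀ (by simp [Fintype.card_pos]), mul_comm]
    linarith [(abs_le.1 this).2]
  calc lazyProb G n x y
      = ∑ z, lazyProb G (n - tmix G) x z * lazyProb G (tmix G) z y := by
        rw [← lazyProb_add, Nat.sub_add_cancel hn]
    _ ≤ ∑ z, lazyProb G (n - tmix G) x z * (5 / 4 / Fintype.card V) :=
        Finset.sum_le_sum fun z _ => mul_le_mul_of_nonneg_left (htmix z) (lazyProb_nonneg G _ x z)
    _ = 5 / 4 / Fintype.card V := by rw [← Finset.sum_mul, sum_lazyProb G hreg hd, one_mul]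

end Mixing

section PathSums

omit [Nonempty V]

variable (G : SimpleGraph V) [DecidableRel G.Adj]

noncomputable def finPathWeight (n : ℕ) (γ : Fin (n + 1) → V) : ℝ :=
  ∏ i : Fin n, lazyStep G (γ i.castSucc) (γ i.succ)

omit [DecidableEq V] [Fintype V] in
lemma extPath_of_le {N j : ℕ} (γ : Fin (N + 1) → V) (h : j ≤ N) :
    extPath N γ j = γ ⟨j, Nat.lt_succ_of_le h⟩ := by
  simp [extPath, min_eq_left h]

lemma pathWeight_eq_finPathWeight (N : ℕ) (γ : Fin (N + 1) → V) :
    pathWeight G N γ = finPathWeight G N γ := by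
  rw [pathWeight, finPathWeight, ← Fin.prod_univ_eq_prod_range]
  refine Finset.prod_congr rfl fun i _ => ?_
  rw [extPath_of_le γ i.is_lt.le, extPath_of_le γ i.is_lt]
  rfl

lemma finPathWeight_snoc (n : ℕ) (γ : Fin (n + 1) → V) (v : V) :
    finPathWeight G (n + 1) (Fin.snoc γ v) =
      finPathWeight G n γ * lazyStep G (γ (Fin.last n)) v := by
  rw [finPathWeight, Fin.prod_univ_castSucc]
  simp only [Fin.snoc_castSucc, Fin.succ_castSucc, Fin.succ_last, Fin.snoc_last]
  rfl

lemma sum_finPathWeight_snoc (n : ℕ) (g : V → ℝ) (H : (Fin (n + 1) → V) → V → ℝ) :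
    ∑ γ : Fin (n + 2) → V,
        g (γ 0) * finPathWeight G (n + 1) γ * H (Fin.init γ) (γ (Fin.last _))
      = ∑ ρ : Fin (n + 1) → V, g (ρ 0) * finPathWeight G n ρ *
          ∑ v, lazyStep G (ρ (Fin.last n)) v * H ρ v := by
  have hsnoc (F : (Fin (n + 2) → V) → ℝ) :
      ∑ γ, F γ = ∑ ρ : Fin (n + 1) → V, ∑ v, F (Fin.snoc ρ v) := by
    rw [← (Fin.snocEquiv fun _ => V).sum_comp, Fintype.sum_prod_type_right]
    rfl
  rw [hsnoc]
  refine Finset.sum_congr rfl fun ρ _ => ?_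
  rw [Finset.mul_sum]
  refine Finset.sum_congr rfl fun v _ => ?_
  rw [finPathWeight_snoc, Fin.init_snoc, Fin.snoc_last, ← Fin.castSucc_zero, Fin.snoc_castSucc]
  ring

lemma sum_finPathWeight_last (g h : V → ℝ) (n : ℕ) :
    ∑ γ : Fin (n + 1) → V, g (γ 0) * finPathWeight G n γ * h (γ (Fin.last n))
      = ∑ x, ∑ y, g x * lazyProb G n x y * h y := by
  induction n generalizing h with
  | zero =>
    rw [← (Equiv.funUnique (Fin 1) V).symm.sum_comp]
    simp [finPathWeight, lazyProb]
  | succ n ih =>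
    rw [sum_finPathWeight_snoc G n g fun _ v => h v, ih fun y => ∑ v, lazyStep G y v * h v]
    refine Finset.sum_congr rfl fun x _ => ?_
    simp_rw [lazyProb_succ_right, Finset.mul_sum, Finset.sum_mul, mul_assoc]
    exact Finset.sum_comm

lemma sum_finPathWeight_pair_last (g : V → ℝ) (f : V → V → ℝ) {j k : ℕ} (hjk : j ≤ k) :
    ∑ γ : Fin (k + 1) → V,
        g (γ 0) * finPathWeight G k γ * f (γ ⟨j, Nat.lt_succ_of_le hjk⟩) (γ (Fin.last k))
      = ∑ x, ∑ y, g x * lazyProb G j x y * ∑ z, lazyProb G (k - j) y z * f y z := by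
  induction k, hjk using Nat.le_induction generalizing f with
  | base =>
    have hstay (y : V) : ∑ z, lazyProb G (j - j) y z * f y z = f y y := by simp [lazyProb]
    simp_rw [hstay]
    exact sum_finPathWeight_last G g (fun y => f y y) j
  | succ k hjk ih =>
    calc _ = ∑ ρ : Fin (k + 1) → V, g (ρ 0) * finPathWeight G k ρ *
          ∑ v, lazyStep G (ρ (Fin.last k)) v * f (ρ ⟨j, Nat.lt_succ_of_le hjk⟩) v :=
          sum_finPathWeight_snoc G k g fun ρ v => f (ρ ⟨j, Nat.lt_succ_of_le hjk⟩) v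
      _ = ∑ x, ∑ y, g x * lazyProb G j x y *
          ∑ z, lazyProb G (k - j) y z * ∑ v, lazyStep G z v * f y v :=
          ih fun y z => ∑ v, lazyStep G z v * f y v
      _ = _ := by
        refine Finset.sum_congr rfl fun x _ => Finset.sum_congr rfl fun y _ => ?_
        rw [Nat.sub_add_comm hjk]
        congr 1
        simp_rw [lazyProb_succ_right, Finset.mul_sum, Finset.sum_mul, mul_assoc]
        exact Finset.sum_comm

lemma sum_finPathWeight_pair {d : ℕ} (hreg : G.IsRegularOfDegree d) (hd : 0 < d)
    (g : V → ℝ) (f : V → V → ℝ) {j k n : ℕ} (hjk : j ≤ k) (hkn : k ≤ n) :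
    ∑ γ : Fin (n + 1) → V, g (γ 0) * finPathWeight G n γ *
        f (γ ⟨j, Nat.lt_succ_of_le (hjk.trans hkn)⟩) (γ ⟨k, Nat.lt_succ_of_le hkn⟩)
      = ∑ x, ∑ y, g x * lazyProb G j x y * ∑ z, lazyProb G (k - j) y z * f y z := by
  induction n, hkn using Nat.le_induction with
  | base => exact sum_finPathWeight_pair_last G g f hjk
  | succ n hkn ih =>
    refine (sum_finPathWeight_snoc G n g fun ρ _ =>
      f (ρ ⟨j, Nat.lt_succ_of_le (hjk.trans hkn)⟩) (ρ ⟨k, Nat.lt_succ_of_le hkn⟩)).trans ?_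
    rw [← ih]
    simp_rw [← Finset.sum_mul, sum_lazyStep G hreg hd, one_mul]

end PathSums

section Expectation

omit [Nonempty V]

variable (G : SimpleGraph V) [DecidableRel G.Adj]

lemma walkExpStat_mono {N : ℕ} {f g : (ℕ → V) → ℝ} (hfg : ∀ w, f w ≤ g w) :
    walkExpStat G N f ≤ walkExpStat G N g := by
  refine Finset.sum_le_sum fun γ _ => mul_le_mul_of_nonneg_left (hfg _) (mul_nonneg ?_ ?_)
  · unfold statDist
    positivity
  · exact Finset.prod_nonneg fun i _ => lazyStep_nonneg G _ _

lemma walkExpStat_add (N : ℕ) (f g : (ℕ → V) → ℝ) :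
    walkExpStat G N (fun w => f w + g w) = walkExpStat G N f + walkExpStat G N g := by
  simp only [walkExpStat, mul_add, Finset.sum_add_distrib]

lemma walkExpStat_sum {ι : Type*} (N : ℕ) (S : Finset ι) (f : ι → (ℕ → V) → ℝ) :
    walkExpStat G N (fun w => ∑ i ∈ S, f i w) = ∑ i ∈ S, walkExpStat G N (f i) := by
  simp only [walkExpStat, Finset.mul_sum]
  exact Finset.sum_comm

end Expectation

section Collision

variable (G : SimpleGraph V) [DecidableRel G.Adj]

lemma walkExpStat_eq_sum_lazyProb {d : ℕ} (hreg : G.IsRegularOfDegree d) (hd : 0 < d)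
    (f : V → V → ℝ) {j k N : ℕ} (hjk : j ≤ k) (hkN : k ≤ N) :
    walkExpStat G N (fun w => f (w j) (w k))
      = (Fintype.card V : ℝ)⁻¹ * ∑ y, ∑ z, lazyProb G (k - j) y z * f y z := by
  calc walkExpStat G N (fun w => f (w j) (w k))
      = ∑ γ : Fin (N + 1) → V, statDist G (γ 0) * finPathWeight G N γ *
          f (γ ⟨j, Nat.lt_succ_of_le (hjk.trans hkN)⟩) (γ ⟨k, Nat.lt_succ_of_le hkN⟩) := by
        refine Finset.sum_congr rfl fun γ _ => ?_
        dsimp only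
        rw [extPath_of_le γ (Nat.zero_le N), extPath_of_le γ (hjk.trans hkN),
          extPath_of_le γ hkN, pathWeight_eq_finPathWeight]
        rfl
    _ = _ := by
      rw [sum_finPathWeight_pair G hreg hd _ f hjk hkN, Finset.sum_comm, Finset.mul_sum]
      refine Finset.sum_congr rfl fun y _ => ?_
      simp_rw [statDist_eq_inv_card G hreg hd, mul_assoc, ← Finset.mul_sum, ← Finset.sum_mul,
        sum_lazyProb_left G hreg hd, one_mul]

lemma walkExpStat_collision_le (hconn : G.Connected) {d : ℕ} (hreg : G.IsRegularOfDegree d)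
    (hd : 0 < d) {j k N : ℕ} (hjk : tmix G + j ≤ k) (hkN : k ≤ N) :
    walkExpStat G N (fun w => if w j = w k then 1 else 0) ≤ 2 / Fintype.card V := by
  have hK : (0 : ℝ) < Fintype.card V := by simp [Fintype.card_pos]
  rw [walkExpStat_eq_sum_lazyProb G hreg hd (fun y z => if y = z then 1 else 0) (by omega) hkN]
  simp only [mul_ite, mul_one, mul_zero, Finset.sum_ite_eq, mem_univ, if_true]
  calc (Fintype.card V : ℝ)⁻¹ * ∑ y, lazyProb G (k - j) y y
      ≤ (Fintype.card V : ℝ)⁻¹ * ∑ _y : V, (5 / 4 / Fintype.card V : ℝ) := by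
        gcongr with y
        exact lazyProb_le_of_tmix_le G hreg hd hconn (by omega) y y
    _ ≤ 2 / Fintype.card V := by
        rw [sum_const, card_univ, nsmul_eq_mul, ← mul_assoc, inv_mul_cancel₀ hK.ne', one_mul]
        gcongr
        norm_num

end Collision

lemma Finset.card_le_card_image_add_card_filter_lt {α β : Type*} [LinearOrder α] [DecidableEq β]
    (S : Finset α) (w : α → β) :
    #S ≤ #(S.image w) + #((S ×ˢ S).filter fun p => p.1 < p.2 ∧ w p.1 = w p.2) := by
  set R := (S ×ˢ S).filter fun p => p.1 < p.2 ∧ w p.1 = w p.2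
  set repeats := R.image Prod.snd
  have hrepeats : repeats ⊆ S := by
    intro j hj
    obtain ⟨p, hp, rfl⟩ := mem_image.1 hj
    exact (mem_product.1 (mem_filter.1 hp).1).2
  have hfirst (i j : α) (hi : i ∈ S \ repeats) (hj : j ∈ S \ repeats) (hij : i < j) :
      w i ≠ w j := fun heq => (mem_sdiff.1 hj).2 <| mem_image.2
    ⟨(i, j), mem_filter.2 ⟨mem_product.2 ⟨(mem_sdiff.1 hi).1, (mem_sdiff.1 hj).1⟩, hij, heq⟩, rfl⟩
  have hinj : Set.InjOn w ↑(S \ repeats) := by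
    intro i hi j hj heq
    rcases lt_trichotomy i j with h | h | h
    · exact absurd heq (hfirst i j hi hj h)
    · exact h
    · exact absurd heq.symm (hfirst j i hj hi h)
  calc #S = #(S \ repeats) + #repeats := (card_sdiff_add_card_eq_card hrepeats).symm
    _ = #((S \ repeats).image w) + #repeats := by rw [card_image_of_injOn hinj]
    _ ≤ #(S.image w) + #R :=
        add_le_add (card_le_card (image_subset_image sdiff_subset)) card_image_le

section LoopErasure

omit [Fintype V] [Nonempty V]

lemma add_mem_NEseg (w : ℕ → V) (a k : ℕ) : a + k ∈ NEseg w a k := by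
  cases k with
  | zero => simp [NEseg]
  | succ k => exact mem_union_right _ (mem_singleton_self _)

lemma apply_ne_of_mem_NEloc {w : ℕ → V} {s a b j k : ℕ} (hj : j ∈ NEloc w s a b) (hjk : j < k)
    (hks : k ≤ j + s) : w j ≠ w k := by
  obtain ⟨hjI, hdisjoint⟩ := mem_filter.1 hj
  have hsj : s ≤ j := by simp only [mem_Icc] at hjI; omega
  intro heq
  have hmem : w j ∈ walkRange w (NEseg w (j - s) s) ∩ walkRange w (Icc (j + 1) (j + s)) :=
    mem_inter.2 ⟨mem_image.2 ⟨j, by simpa [Nat.sub_add_cancel hsj] using add_mem_NEseg w (j - s) s,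
      rfl⟩, mem_image.2 ⟨k, mem_Icc.2 ⟨hjk, hks⟩, heq.symm⟩⟩
  simp [hdisjoint] at hmem

def separatedPairs (s : ℕ) (I : Finset ℕ) : Finset (ℕ × ℕ) :=
  (I ×ˢ I).filter fun p => p.1 + s < p.2

omit [DecidableEq V] in
lemma card_separatedPairs_le (s : ℕ) (I : Finset ℕ) : #(separatedPairs s I) ≤ #I ^ 2 :=
  (card_filter_le (I ×ˢ I) _).trans_eq (by rw [card_product, sq])

lemma card_NEloc_le (w : ℕ → V) (s a b : ℕ) :
    (#(NEloc w s a b) : ℝ) ≤ #(walkRange w (NEloc w s a b)) +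
      ∑ p ∈ separatedPairs s (Icc (a + s) (b - s)), if w p.1 = w p.2 then 1 else 0 := by
  have hsub : ((NEloc w s a b ×ˢ NEloc w s a b).filter fun p => p.1 < p.2 ∧ w p.1 = w p.2) ⊆
      (separatedPairs s (Icc (a + s) (b - s))).filter fun p => w p.1 = w p.2 := by
    intro p hp
    obtain ⟨hpS, hlt, heq⟩ := mem_filter.1 hp
    obtain ⟨h₁, h₂⟩ := mem_product.1 hpS
    refine mem_filter.2 ⟨mem_filter.2 ⟨mem_product.2 ⟨filter_subset _ _ h₁, filter_subset _ _ h₂⟩,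
      ?_⟩, heq⟩
    by_contra hclose
    exact apply_ne_of_mem_NEloc h₁ hlt (by omega) heq
  rw [Finset.sum_boole]
  exact_mod_cast (card_le_card_image_add_card_filter_lt _ w).trans
    (Nat.add_le_add_left (card_le_card hsub) _)

end LoopErasure

theorem expected_range_of_locally_nonerased_lower_bound_general
    (G : SimpleGraph V) [DecidableRel G.Adj] (hconn : G.Connected)
    (hcard : 2 ≤ Fintype.card V) (d : ℕ) (hreg : G.IsRegularOfDegree d)
    (s : ℕ) (hs : tmix G + 1 ≤ s)
    (aA bA N : ℕ)
    (hAcard : 2 * s + 1 ≤ (Finset.Icc aA bA).card) (hNA : bA ≤ N) :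
    walkExpStat G N (fun w => ((NEloc w s aA bA).card : ℝ)) -
        2 * (((Finset.Icc aA bA).card : ℝ) - 2 * s) ^ 2 / (Fintype.card V : ℝ) ≤
      walkExpStat G N (fun w => ((walkRange w (NEloc w s aA bA)).card : ℝ)) := by
  have : Nontrivial V := Fintype.one_lt_card_iff_nontrivial.1 hcard
  have hd : 0 < d := hreg (Classical.arbitrary V) ▸ hconn.preconnected.degree_pos_of_nontrivial _
  set I := Icc (aA + s) (bA - s)
  have hI : #I + 2 * s = #(Icc aA bA) := by
    simp only [I, Nat.card_Icc] at hAcard ⊢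
    omega
  have hcollision (p) (hp : p ∈ separatedPairs s I) :
      walkExpStat G N (fun w => if w p.1 = w p.2 then 1 else 0) ≤ 2 / Fintype.card V := by
    simp only [separatedPairs, I, mem_filter, mem_product, mem_Icc] at hp
    exact walkExpStat_collision_le G hconn hreg hd (by omega) (by omega)
  have hpairs : (#(separatedPairs s I) : ℝ) ≤ #I ^ 2 := by exact_mod_cast card_separatedPairs_le s I
  rw [sub_le_iff_le_add]
  calc walkExpStat G N (fun w => (#(NEloc w s aA bA) : ℝ))
      ≤ walkExpStat G N (fun w => #(walkRange w (NEloc w s aA bA))) +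
          ∑ p ∈ separatedPairs s I, walkExpStat G N (fun w => if w p.1 = w p.2 then 1 else 0) := by
        rw [← walkExpStat_sum, ← walkExpStat_add]
        exact walkExpStat_mono G fun w => card_NEloc_le w s aA bA
    _ ≤ walkExpStat G N (fun w => #(walkRange w (NEloc w s aA bA))) +
          #I ^ 2 * (2 / Fintype.card V) := by
        grw [Finset.sum_le_card_nsmul _ _ _ hcollision, nsmul_eq_mul, hpairs]
    _ = _ := by
        rw [← hI]
        push_cast
        ring

/-- Expected number of distinct points of the locally non-erased path
versus the number of locally non-erased indices. -/
theorem expected_range_of_locally_nonerased_lower_bound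
    (G : SimpleGraph V) [DecidableRel G.Adj] (hconn : G.Connected)
    (hcard : 2 ≤ Fintype.card V) (d : ℕ) (hreg : G.IsRegularOfDegree d)
    (s : ℕ) (hs : tmix G + 1 ≤ s)
    (aA bA N : ℕ) (hA : aA ≤ bA)
    (hAcard : 2 * s + 1 ≤ (Finset.Icc aA bA).card) (hNA : bA ≤ N) :
    walkExpStat G N (fun w => ((NEloc w s aA bA).card : ℝ)) -
        2 * (((Finset.Icc aA bA).card : ℝ) - 2 * s) ^ 2 / (Fintype.card V : ℝ) ≤
      walkExpStat G N (fun w => ((walkRange w (NEloc w s aA bA)).card : ℝ)) :=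
  expected_range_of_locally_nonerased_lower_bound_general G hconn hcard d hreg s hs aA bA N hAcard
    hNA
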